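/- Let A be a vector space over a field of characteristic zero with four bilinear products ↘, ↗, ↖, ↙, and define x≻y = x↗y + x↘y, x≺y = x↖y + x↙y, x∨y = x↘y + x↙y, x∧y = x↗y + x↖y. Then: (1) (A,↘,↗,↖,↙) is a quadri-algebra if and only if (A,≻,≺) is a dendriform algebra and (L_↘, R_↗, L_↙, R_↖, A) is a bimodule of (A,≻,≺); (2) (A,↘,↗,↖,↙) is a quadri-algebra if and only if (A,∨,∧) is a dendriform algebra and (L_↘, R_↙, L_↗, R_↖, A) is a bimodule of (A,∨,∧). -/

import Mathlib

open LinearMap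

/-- Dendriform algebra axioms for a pair of bilinear products `succ` (≻) and `prec` (≺). -/
def IsDendriform {K A : Type*} [Field K] [AddCommGroup A] [Module K A]
    (succ prec : A →ₗ[K] A →ₗ[K] A) : Prop :=
  (∀ x y z : A, prec (prec x y) z = prec x (succ y z + prec y z)) ∧
  (∀ x y z : A, prec (succ x y) z = succ x (prec y z)) ∧
  (∀ x y z : A, succ x (succ y z) = succ (succ x y + prec x y) z)

/-- Bimodule of a dendriform algebra `(A, succ, prec)` on `V`
(maps `l_≻ = ls`, `r_≻ = rs`, `l_≺ = lp`, `r_≺ = rp`). -/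
def IsDendBimodule {K A V : Type*} [Field K] [AddCommGroup A] [Module K A]
    [AddCommGroup V] [Module K V] (succ prec : A →ₗ[K] A →ₗ[K] A)
    (ls rs lp rp : A →ₗ[K] V →ₗ[K] V) : Prop :=
  (∀ x y : A, lp (prec x y) = lp x ∘ₗ (lp y + ls y)) ∧
  (∀ x y : A, rp x ∘ₗ lp y = lp y ∘ₗ (rp x + rs x)) ∧
  (∀ x y : A, rp x ∘ₗ rp y = rp (succ y x + prec y x)) ∧
  (∀ x y : A, lp (succ x y) = ls x ∘ₗ lp y) ∧
  (∀ x y : A, rp x ∘ₗ ls y = ls y ∘ₗ rp x) ∧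
  (∀ x y : A, rp x ∘ₗ rs y = rs (prec y x)) ∧
  (∀ x y : A, ls (succ x y + prec x y) = ls x ∘ₗ ls y) ∧
  (∀ x y : A, rs x ∘ₗ (lp y + ls y) = ls y ∘ₗ rs x) ∧
  (∀ x y : A, rs x ∘ₗ (rs y + rp y) = rs (succ y x))

/-- Quadri-algebra axioms for the four products ↘ (`dse`), ↗ (`dne`), ↖ (`dnw`), ↙ (`dsw`). -/
def IsQuadri {K A : Type*} [Field K] [AddCommGroup A] [Module K A]
    (dse dne dnw dsw : A →ₗ[K] A →ₗ[K] A) : Prop :=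
  (∀ x y z : A, dnw (dnw x y) z = dnw x (dse y z + dne y z + dnw y z + dsw y z)) ∧
  (∀ x y z : A, dnw (dne x y) z = dne x (dnw y z + dsw y z)) ∧
  (∀ x y z : A, dne (dne x y + dnw x y) z = dne x (dne y z + dse y z)) ∧
  (∀ x y z : A, dnw (dsw x y) z = dsw x (dne y z + dnw y z)) ∧
  (∀ x y z : A, dnw (dse x y) z = dse x (dnw y z)) ∧
  (∀ x y z : A, dne (dse x y + dsw x y) z = dse x (dne y z)) ∧
  (∀ x y z : A, dsw (dnw x y + dsw x y) z = dsw x (dse y z + dsw y z)) ∧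
  (∀ x y z : A, dsw (dne x y + dse x y) z = dse x (dsw y z)) ∧
  (∀ x y z : A, dse (dse x y + dne x y + dnw x y + dsw x y) z = dse x (dse y z))

/-!
Each of the nine bimodule axioms for `(L_↘, R_↗, L_↙, R_↖)`, evaluated at a third element,
is one of the nine quadri-algebra axioms with its variables renamed, so this bimodule
condition alone is equivalent to being a quadri-algebra; the dendriform axioms of `≻, ≺`
are sums of three quadri-algebra axioms each. Exchanging `↗` and `↙` preserves the
quadri-algebra axioms and turns `≻, ≺` into `∨, ∧`, which gives the second equivalence.
-/

section

variable {K A : Type*} [Field K] [AddCommGroup A] [Module K A]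
  {dse dne dnw dsw : A →ₗ[K] A →ₗ[K] A}

theorem IsQuadri.transpose (h : IsQuadri dse dne dnw dsw) : IsQuadri dse dsw dnw dne := by
  simp only [IsQuadri, map_add, LinearMap.add_apply] at h ⊢
  obtain ⟨q1, q2, q3, q4, q5, q6, q7, q8, q9⟩ := h
  refine ⟨fun x y z => ?_, fun x y z => ?_, fun x y z => ?_, fun x y z => ?_, q5,
    fun x y z => ?_, fun x y z => ?_, fun x y z => ?_, fun x y z => ?_⟩
  · linear_combination (norm := abel1) q1 x y z
  · linear_combination (norm := abel1) q4 x y z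
  · linear_combination (norm := abel1) q7 x y z
  · linear_combination (norm := abel1) q2 x y z
  · linear_combination (norm := abel1) q8 x y z
  · linear_combination (norm := abel1) q3 x y z
  · linear_combination (norm := abel1) q6 x y z
  · linear_combination (norm := abel1) q9 x y z

theorem isQuadri_transpose_iff : IsQuadri dse dsw dnw dne ↔ IsQuadri dse dne dnw dsw :=
  ⟨IsQuadri.transpose, IsQuadri.transpose⟩

theorem IsQuadri.isDendriform (h : IsQuadri dse dne dnw dsw) :
    IsDendriform (dne + dse) (dnw + dsw) := by
  simp only [IsQuadri, IsDendriform, map_add, LinearMap.add_apply] at h ⊢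
  obtain ⟨q1, q2, q3, q4, q5, q6, q7, q8, q9⟩ := h
  refine ⟨fun x y z => ?_, fun x y z => ?_, fun x y z => ?_⟩
  · linear_combination (norm := abel1) q1 x y z + q4 x y z + q7 x y z
  · linear_combination (norm := abel1) q2 x y z + q5 x y z + q8 x y z
  · linear_combination (norm := abel1) -q3 x y z - q6 x y z - q9 x y z

theorem isQuadri_iff_isDendBimodule :
    IsQuadri dse dne dnw dsw ↔
      IsDendBimodule (dne + dse) (dnw + dsw) dse dne.flip dsw dnw.flip := by
  simp only [IsQuadri, IsDendBimodule, LinearMap.ext_iff, LinearMap.add_apply, coe_comp,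
    Function.comp_apply, flip_apply, map_add]
  constructor
  · rintro ⟨q1, q2, q3, q4, q5, q6, q7, q8, q9⟩
    refine ⟨fun x y z => ?_, fun x y z => ?_, fun x y z => ?_, fun x y z => ?_,
      fun x y z => ?_, fun x y z => ?_, fun x y z => ?_, fun x y z => ?_, fun x y z => ?_⟩
    · linear_combination (norm := abel1) q7 x y z
    · linear_combination (norm := abel1) q4 y z x
    · linear_combination (norm := abel1) q1 z y x
    · linear_combination (norm := abel1) q8 x y z
    · linear_combination (norm := abel1) q5 y z x
    · linear_combination (norm := abel1) q2 z y x
    · linear_combination (norm := abel1) q9 x y z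
    · linear_combination (norm := abel1) q6 y z x
    · linear_combination (norm := abel1) q3 z y x
  · rintro ⟨b1, b2, b3, b4, b5, b6, b7, b8, b9⟩
    refine ⟨fun x y z => ?_, fun x y z => ?_, fun x y z => ?_, fun x y z => ?_,
      fun x y z => ?_, fun x y z => ?_, fun x y z => ?_, fun x y z => ?_, fun x y z => ?_⟩
    · linear_combination (norm := abel1) b3 z y x
    · linear_combination (norm := abel1) b6 z y x
    · linear_combination (norm := abel1) b9 z y x
    · linear_combination (norm := abel1) b2 z x y
    · linear_combination (norm := abel1) b5 z x y
    · linear_combination (norm := abel1) b8 z x y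
    · linear_combination (norm := abel1) b1 x y z
    · linear_combination (norm := abel1) b4 x y z
    · linear_combination (norm := abel1) b7 x y z

theorem isQuadri_iff_isDendriform_and_isDendBimodule :
    IsQuadri dse dne dnw dsw ↔
      IsDendriform (dne + dse) (dnw + dsw) ∧
        IsDendBimodule (dne + dse) (dnw + dsw) dse dne.flip dsw dnw.flip :=
  ⟨fun h => ⟨h.isDendriform, isQuadri_iff_isDendBimodule.mp h⟩,
    fun h => isQuadri_iff_isDendBimodule.mpr h.2⟩

end

theorem quadri_iff_dendriform_and_bimodule_general
    {K A : Type*} [Field K] [AddCommGroup A] [Module K A]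
    (dse dne dnw dsw : A →ₗ[K] A →ₗ[K] A) :
    (IsQuadri dse dne dnw dsw ↔
      (IsDendriform (dne + dse) (dnw + dsw) ∧
       IsDendBimodule (dne + dse) (dnw + dsw) dse dne.flip dsw dnw.flip)) ∧
    (IsQuadri dse dne dnw dsw ↔
      (IsDendriform (dse + dsw) (dne + dnw) ∧
       IsDendBimodule (dse + dsw) (dne + dnw) dse dsw.flip dne dnw.flip)) := by
  refine ⟨isQuadri_iff_isDendriform_and_isDendBimodule, ?_⟩
  rw [← isQuadri_transpose_iff, add_comm dse dsw, add_comm dne dnw]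
  exact isQuadri_iff_isDendriform_and_isDendBimodule

/-- Proposition 3.4.3: `(A, ↘, ↗, ↖, ↙)` is a quadri-algebra iff the horizontal sums
`≻ = ↗ + ↘`, `≺ = ↖ + ↙` form a dendriform algebra for which
`(L_↘, R_↗, L_↙, R_↖, A)` is a bimodule; similarly for the vertical sums
`∨ = ↘ + ↙`, `∧ = ↗ + ↖` and `(L_↘, R_↙, L_↗, R_↖, A)`. -/
theorem quadri_iff_dendriform_and_bimodule
    {K A : Type*} [Field K] [CharZero K] [AddCommGroup A] [Module K A]
    (dse dne dnw dsw : A →ₗ[K] A →ₗ[K] A) :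
    (IsQuadri dse dne dnw dsw ↔
      (IsDendriform (dne + dse) (dnw + dsw) ∧
       IsDendBimodule (dne + dse) (dnw + dsw) dse dne.flip dsw dnw.flip)) ∧
    (IsQuadri dse dne dnw dsw ↔
      (IsDendriform (dse + dsw) (dne + dnw) ∧
       IsDendBimodule (dse + dsw) (dne + dnw) dse dsw.flip dne dnw.flip)) :=
  quadri_iff_dendriform_and_bimodule_general dse dne dnw dsw
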